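/- Let J = pq, where p, q are odd primes with q > 3p and pq is not of the form 3^k · ∏ p_i^{l_i} · ∏ q_j^{2m_j} (p_i ≡ 1, q_j ≡ −1 mod 3). Then there do not exist positive integers k, m, n with gcd(m, n) = 1, n ≤ m ≤ 2n, 3 ∤ (m + n), (m, n) ≠ (1, 1), and J = k(2m − n)n; hence Λ_h has no well-rounded sublattice of index J. The same conclusion holds for J = 2p with p an odd prime. -/
import Mathlib


/-- `J` has the form `3^k · ∏ p_i^{l_i} · ∏ q_j^{2 m_j}` with `p_i ≡ 1 (mod 3)`
and `q_j ≡ -1 (mod 3)` primes: every prime factor is `3`, is `≡ 1 (mod 3)`,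
or occurs to an even power. -/
def IsIdealIndexForm (J : ℕ) : Prop :=
  ∀ p : ℕ, p.Prime → p ∣ J → p = 3 ∨ p % 3 = 1 ∨ Even (J.factorization p)

/-- `J` admits a factorization corresponding to a non-ideal well-rounded
sublattice of the hexagonal lattice of index `J`. -/
def HasWRFactorization (J : ℕ) : Prop :=
  ∃ k m n : ℕ, 0 < k ∧ 0 < m ∧ 0 < n ∧ Nat.gcd m n = 1 ∧
    n ≤ m ∧ m ≤ 2 * n ∧ ¬ 3 ∣ (m + n) ∧ (m, n) ≠ (1, 1) ∧
    J = k * (2 * m - n) * n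

theorem stmt_15 :
    (∀ p q : ℕ, p.Prime → q.Prime → Odd p → Odd q → 3 * p < q →
      ¬ IsIdealIndexForm (p * q) → ¬ HasWRFactorization (p * q)) ∧
    (∀ p : ℕ, p.Prime → Odd p → ¬ HasWRFactorization (2 * p)) := by
  have key : ∀ p q e : ℕ, p.Prime → q.Prime → e ∣ p * q →
      e = 1 ∨ e = p ∨ e = q ∨ e = p * q := by
    intro p q e hp hq h
    by_cases hpe : p ∣ e
    · obtain ⟨f, rfl⟩ := hpe
      have hf : f ∣ q := (mul_dvd_mul_iff_left hp.pos.ne').mp h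
      rcases (Nat.dvd_prime hq).mp hf with rfl | rfl
      · right; left; simp
      · right; right; right; rfl
    · have hcop : Nat.Coprime e p := ((hp.coprime_iff_not_dvd).mpr hpe).symm
      have heq : e ∣ q := hcop.dvd_of_dvd_mul_left h
      rcases (Nat.dvd_prime hq).mp heq with rfl | rfl
      · left; rfl
      · right; right; left; rfl
  constructor
  · intro p q hp hq hop hoq hlt _ hwr
    obtain ⟨k, m, n, hk, hm, hn, hg, hnm, hm2n, h3, hne, hJ⟩ := hwr
    have hne' : ¬ (m = 1 ∧ n = 1) := by
      intro ⟨h1, h2⟩; exact hne (by simp [h1, h2])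
    have hn2 : 2 ≤ n := by omega
    have hp2 : 2 ≤ p := hp.two_le
    have hq2 : 2 ≤ q := hq.two_le
    have hp3 : 3 ≤ p := by
      have := Nat.odd_iff.mp hop; omega
    have hndvd : n ∣ p * q := ⟨k * (2 * m - n), by rw [hJ]; ring⟩
    rcases key p q n hp hq hndvd with h | h | h | h
    · omega
    · -- n = p
      rw [← h] at hJ hlt hp3
      have h1 : n * q = n * (k * (2 * m - n)) := by rw [hJ]; ring
      have h2 : q = k * (2 * m - n) := Nat.eq_of_mul_eq_mul_left (by omega) h1
      have hd : (2 * m - n) ∣ q := ⟨k, by rw [h2]; ring⟩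
      clear h1 h2
      rcases (Nat.dvd_prime hq).mp hd with h' | h' <;> omega
    · -- n = q
      rw [← h] at hJ hlt
      have h1 : n * p = n * (k * (2 * m - n)) := by rw [mul_comm n p, hJ]; ring
      have h2 : p = k * (2 * m - n) := Nat.eq_of_mul_eq_mul_left (by omega) h1
      have hdle : 2 * m - n ≤ p := by
        rw [h2]; exact Nat.le_mul_of_pos_left _ hk
      clear h1 h2
      omega
    · -- n = p * q
      rw [← h] at hJ
      have h2 : k * (2 * m - n) = 1 := by
        have h1 : k * (2 * m - n) * n = 1 * n := by rw [← hJ, one_mul]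
        exact Nat.eq_of_mul_eq_mul_right (by omega) h1
      have hd1 : 2 * m - n ≤ 1 := by
        have := Nat.le_mul_of_pos_left (2 * m - n) hk
        rw [h2] at this; exact this
      omega
  · intro p hp hop hwr
    obtain ⟨k, m, n, hk, hm, hn, hg, hnm, hm2n, h3, hne, hJ⟩ := hwr
    have hne' : ¬ (m = 1 ∧ n = 1) := by
      intro ⟨h1, h2⟩; exact hne (by simp [h1, h2])
    have hn2 : 2 ≤ n := by omega
    have hp2 : 2 ≤ p := hp.two_le
    have hp3 : 3 ≤ p := by
      have := Nat.odd_iff.mp hop; omega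
    have hndvd : n ∣ 2 * p := ⟨k * (2 * m - n), by rw [hJ]; ring⟩
    rcases key 2 p n Nat.prime_two hp hndvd with h | h | h | h
    · omega
    · -- n = 2
      subst h
      have hmodd : ¬ 2 ∣ m := by
        intro hdm
        have : (2 : ℕ) ∣ Nat.gcd m 2 := Nat.dvd_gcd hdm dvd_rfl
        omega
      have hm3 : m = 3 := by omega
      subst hm3
      have hpo := Nat.odd_iff.mp hop
      omega
    · -- n = p
      rw [← h] at hJ hp3
      have h1 : n * 2 = n * (k * (2 * m - n)) := by rw [mul_comm n 2, hJ]; ring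
      have h2 : 2 = k * (2 * m - n) := Nat.eq_of_mul_eq_mul_left (by omega) h1
      have hdle : 2 * m - n ≤ 2 :=
        le_of_le_of_eq (Nat.le_mul_of_pos_left _ hk) h2.symm
      clear h1 h2
      omega
    · -- n = 2 * p
      rw [← h] at hJ
      have h2 : k * (2 * m - n) = 1 := by
        have h1 : k * (2 * m - n) * n = 1 * n := by rw [← hJ, one_mul]
        exact Nat.eq_of_mul_eq_mul_right (by omega) h1
      have hd1 : 2 * m - n ≤ 1 := by
        have := Nat.le_mul_of_pos_left (2 * m - n) hk
        rw [h2] at this; exact this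
      omega
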